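/- For every k with 1 ≤ k ≤ n−1, in the group algebra K[S_n] one has A'_{n−k}·R_{k,k+1}·R_{k,k+2}⋯R_{k,n} = A'_{n−k}·Π_k = Π_k·A'_{n−k}. -/

import Mathlib

/-!
STATEMENT 1: For 1 ≤ k ≤ n−1, in the group algebra K[S_n],
A'_{n−k}·R_{k,k+1}⋯R_{k,n} = A'_{n−k}·Π_k = Π_k·A'_{n−k}.
The point `i : Fin n` carries the label `i+1 ∈ {1,…,n}`.
-/

noncomputable section

abbrev K : Type := RatFunc ℚ

def u : K := RatFunc.X

variable {n : ℕ}

/-- The transposition (a,b) as an element of the group algebra K[S_n]. -/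
def T (a b : Fin n) : MonoidAlgebra K (Equiv.Perm (Fin n)) :=
  MonoidAlgebra.of K (Equiv.Perm (Fin n)) (Equiv.swap a b)

/-- `Aprime m` = A'_{n−m}: the signed sum of all permutations fixing the
points with labels 1,…,m (i.e. the points `i : Fin n` with `(i:ℕ) < m`). -/
def Aprime (m : ℕ) : MonoidAlgebra K (Equiv.Perm (Fin n)) :=
  ∑ σ ∈ Finset.univ.filter (fun σ : Equiv.Perm (Fin n) => ∀ i : Fin n, (i : ℕ) < m → σ i = i),
    (((Equiv.Perm.sign σ : ℤ) : K)) • MonoidAlgebra.of K (Equiv.Perm (Fin n)) σ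

/-- R_{ij} = 1 − (2u−i−j+2)⁻¹·(i,j), with labels i+1, j+1. -/
def Rga (i j : Fin n) : MonoidAlgebra K (Equiv.Perm (Fin n)) :=
  1 - ((2 * u - ((i : ℕ) + 1 : K) - ((j : ℕ) + 1 : K) + 2)⁻¹ : K) • T i j

/-- Π_k = 1 − (2u−k−n+2)⁻¹·∑_{i=k+1}^n (k,i), with label k+1. -/
def PiGA (k : Fin n) : MonoidAlgebra K (Equiv.Perm (Fin n)) :=
  1 - ((2 * u - ((k : ℕ) + 1 : K) - (n : K) + 2)⁻¹ : K) •
    ∑ i ∈ Finset.univ.filter (fun i => k < i), T k i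

/-- The ordered product R_{k,k+1} R_{k,k+2} ⋯ R_{k,n}. -/
def Rprod (k : Fin n) : MonoidAlgebra K (Equiv.Perm (Fin n)) :=
  (((List.finRange n).filter (fun i => decide (k < i))).map (fun i => Rga k i)).prod

/-!
Right multiplication by a permutation `τ` fixing `1, …, k` multiplies `A'_{n-k}` by `sgn τ`.
As `(k,a)(k,b) = (a,b)(k,a)`, this gives `A'·(k,a)(k,b) = -A'·(k,a)` for `k < a < b`, so
`A'·R_{k,k+1}⋯R_{k,j}` collapses to `A'·(1 - (2u-k-j+2)⁻¹ ∑_{k<i≤j} (k,i))`: the induction step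
is the identity `1/x + 1/(x(x-1)) = 1/(x-1)`. The element `∑_{i>k} (k,i)` commutes with
`A'` because conjugation by a permutation fixing `1, …, k` only permutes its terms.
-/

open Equiv Finset

theorem mul_prod_ofFn_one_sub_smul {F R : Type*} [Field F] [Ring R] [Algebra F R]
    (A : R) (y : F) {d : ℕ} (t : Fin d → R) (hy : ∀ i ≤ d, y ≠ i)
    (ht : ∀ i j : Fin d, i < j → A * t i * t j = -(A * t i)) :
    A * (List.ofFn fun i => 1 - (y - (i : ℕ) - 1)⁻¹ • t i).prod
      = A * (1 - (y - d)⁻¹ • ∑ i, t i) := by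
  induction d with
  | zero => simp
  | succ d ih =>
    rw [List.ofFn_succ', List.prod_concat, ← mul_assoc]
    simp only [Fin.val_castSucc, Fin.val_last]
    rw [ih _ (fun i hi => hy i (by omega))
      (fun i j hij => ht _ _ (Fin.castSucc_lt_castSucc_iff.mpr hij)), Fin.sum_univ_castSucc]
    set S := ∑ i : Fin d, t i.castSucc
    have hS : A * S * t (Fin.last d) = -(A * S) := by
      simp only [S, mul_sum, sum_mul, ← sum_neg_distrib]
      exact sum_congr rfl fun i _ => ht _ _ (Fin.castSucc_lt_last i)
    have hcoef : (y - d)⁻¹ + (y - d)⁻¹ * (y - d - 1)⁻¹ = (y - d - 1)⁻¹ := by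
      have h₀ : y - d ≠ 0 := sub_ne_zero.mpr (hy d (Nat.le_succ d))
      have h₁ : y - d - 1 ≠ 0 := by
        rw [sub_sub, ← Nat.cast_add_one]; exact sub_ne_zero.mpr (hy (d + 1) le_rfl)
      field_simp
      ring
    have hcast : y - ((d + 1 : ℕ) : F) = y - d - 1 := by push_cast; ring
    rw [hcast]
    simp only [mul_sub, sub_mul, mul_one, mul_add, smul_add, mul_smul_comm, smul_mul_assoc]
    rw [hS]
    linear_combination (norm := module) -hcoef • (A * S)

theorem two_mul_u_ne_natCast (m : ℕ) : 2 * u ≠ m := by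
  intro h
  have h' : algebraMap (Polynomial ℚ) K (2 * Polynomial.X) = algebraMap (Polynomial ℚ) K m := by
    rw [map_mul, map_ofNat, map_natCast, RatFunc.algebraMap_X]; exact h
  simpa using congrArg (Polynomial.coeff · 1) (IsFractionRing.injective (Polynomial ℚ) K h')

theorem le_apply_iff_of_fixes {m : ℕ} {σ : Perm (Fin n)}
    (hσ : ∀ i : Fin n, (i : ℕ) < m → σ i = i) (i : Fin n) : m ≤ (σ i : ℕ) ↔ m ≤ (i : ℕ) := by
  constructor
  · intro h
    by_contra! hi
    exact h.not_gt (by rwa [hσ i hi])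
  · intro h
    by_contra! hi
    rw [σ.injective (hσ _ hi)] at hi
    exact h.not_gt hi

theorem Aprime_mul_of {m : ℕ} {τ : Perm (Fin n)} (hτ : ∀ i : Fin n, (i : ℕ) < m → τ i = i) :
    Aprime m * MonoidAlgebra.of K _ τ = ((Perm.sign τ : ℤ) : K) • Aprime m := by
  rw [Aprime, sum_mul, smul_sum]
  refine sum_equiv (Equiv.mulRight τ) (fun σ => ?_) (fun σ _ => ?_)
  · simp only [mem_filter, mem_univ, true_and, coe_mulRight, Perm.mul_apply]
    exact forall_congr' fun i => imp_congr_right fun hi => by rw [hτ i hi]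
  · rw [smul_mul_assoc, ← map_mul, smul_smul, coe_mulRight, Perm.sign_mul, ← Int.cast_mul,
      ← Units.val_mul, mul_left_comm, Int.units_mul_self, mul_one]

theorem Aprime_mul_T {m : ℕ} {a b : Fin n} (hab : a ≠ b) (ha : m ≤ (a : ℕ)) (hb : m ≤ (b : ℕ)) :
    Aprime m * T a b = -Aprime m := by
  rw [T, Aprime_mul_of, Perm.sign_swap hab]
  · simp
  · intro i hi
    exact swap_apply_of_ne_of_ne (Fin.ne_of_val_ne (by omega)) (Fin.ne_of_val_ne (by omega))

theorem T_mul_T {k a b : Fin n} (hbk : b ≠ k) (hba : b ≠ a) : T k a * T k b = T a b * T k a := by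
  rw [T, T, T, ← map_mul, ← map_mul, mul_swap_eq_swap_mul, swap_apply_left,
    swap_apply_of_ne_of_ne hbk hba]

theorem Aprime_mul_T_mul_T {m : ℕ} {k a b : Fin n} (hab : a ≠ b) (hbk : b ≠ k)
    (ha : m ≤ (a : ℕ)) (hb : m ≤ (b : ℕ)) :
    Aprime m * T k a * T k b = -(Aprime m * T k a) := by
  rw [mul_assoc, T_mul_T hbk hab.symm, ← mul_assoc, Aprime_mul_T hab ha hb, neg_mul]

theorem of_mul_T {σ : Perm (Fin n)} {k : Fin n} (hσ : σ k = k) (i : Fin n) :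
    MonoidAlgebra.of K _ σ * T k i = T k (σ i) * MonoidAlgebra.of K _ σ := by
  rw [T, T, ← map_mul, ← map_mul, mul_swap_eq_swap_mul, hσ]

theorem of_mul_sum_T_comm {σ : Perm (Fin n)} {k : Fin n}
    (hσ : ∀ i : Fin n, (i : ℕ) < k + 1 → σ i = i) :
    MonoidAlgebra.of K _ σ * ∑ i ∈ univ.filter (fun i => k < i), T k i
      = (∑ i ∈ univ.filter (fun i => k < i), T k i) * MonoidAlgebra.of K _ σ := by
  rw [mul_sum, sum_mul]
  refine sum_equiv σ (fun i => ?_) (fun i _ => of_mul_T (hσ k k.val.lt_add_one) i)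
  simp only [mem_filter, mem_univ, true_and, Fin.lt_def, ← Nat.succ_le_iff]
  exact (le_apply_iff_of_fixes hσ i).symm

theorem Aprime_mul_sum_T_comm (k : Fin n) :
    Aprime ((k : ℕ) + 1) * ∑ i ∈ univ.filter (fun i => k < i), T k i
      = (∑ i ∈ univ.filter (fun i => k < i), T k i) * Aprime ((k : ℕ) + 1) := by
  rw [Aprime, sum_mul, mul_sum]
  refine sum_congr rfl fun σ hσ => ?_
  rw [smul_mul_assoc, mul_smul_comm, of_mul_sum_T_comm (mem_filter.mp hσ).2]

def nthAbove (k : Fin n) (i : Fin (n - 1 - k)) : Fin n := ⟨k + 1 + i, by omega⟩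

@[simp]
theorem val_nthAbove (k : Fin n) (i : Fin (n - 1 - k)) : (nthAbove k i : ℕ) = k + 1 + i := rfl

theorem filter_lt_finRange (k : Fin n) :
    (List.finRange n).filter (fun i => decide (k < i)) = List.ofFn (nthAbove k) := by
  refine List.Pairwise.eq_of_mem_iff (r := (· < ·))
    ((List.sortedLT_finRange n).pairwise.filter _)
    (List.pairwise_ofFn.mpr fun i j hij => ?_) fun j => ?_
  · simp only [Fin.lt_def, val_nthAbove] at hij ⊢
    omega
  · simp only [List.mem_filter, List.mem_finRange, true_and, decide_eq_true_eq, List.mem_ofFn,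
      Fin.ext_iff, Fin.lt_def, val_nthAbove]
    exact ⟨fun h => ⟨⟨j - k - 1, by omega⟩, by dsimp only; omega⟩, fun ⟨i, hi⟩ => by omega⟩

theorem sum_filter_lt_eq_sum_nthAbove {M : Type*} [AddCommMonoid M] (k : Fin n) (f : Fin n → M) :
    ∑ j ∈ univ.filter (fun j => k < j), f j = ∑ i, f (nthAbove k i) := by
  symm
  refine sum_bij (fun i _ => nthAbove k i) (fun i _ => ?_) (fun i _ j _ h => ?_)
    (fun j hj => ?_) (fun _ _ => rfl)
  · simp only [mem_filter, mem_univ, true_and, Fin.lt_def, val_nthAbove]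
    omega
  · simpa [Fin.ext_iff] using h
  · simp only [mem_filter, mem_univ, true_and, Fin.lt_def] at hj
    exact ⟨⟨j - k - 1, by omega⟩, mem_univ _, Fin.ext (by simp only [val_nthAbove]; omega)⟩

theorem Rprod_eq_prod_ofFn (k : Fin n) :
    Rprod k = (List.ofFn fun i =>
      1 - (2 * u - 2 * (k : ℕ) - (i : ℕ) - 1)⁻¹ • T k (nthAbove k i)).prod := by
  rw [Rprod, filter_lt_finRange, List.map_ofFn]
  congr 1
  refine List.ofFn_inj.mpr (funext fun i => ?_)
  simp only [Function.comp_apply, Rga, val_nthAbove]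
  congr 3
  push_cast
  ring

theorem PiGA_eq_sum_nthAbove (k : Fin n) :
    PiGA k = 1 - (2 * u - 2 * (k : ℕ) - (n - 1 - k : ℕ))⁻¹ • ∑ i, T k (nthAbove k i) := by
  have hn : ((n - 1 - k : ℕ) : K) = n - 1 - k := by
    rw [Nat.sub_sub, Nat.cast_sub (by omega)]
    push_cast
    ring
  rw [PiGA, sum_filter_lt_eq_sum_nthAbove, hn]
  ring_nf

theorem aprime_Rprod_eq_aprime_Pi_general (k : Fin n) :
    Aprime ((k : ℕ) + 1) * Rprod k = Aprime ((k : ℕ) + 1) * PiGA k ∧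
    Aprime ((k : ℕ) + 1) * PiGA k = PiGA k * Aprime ((k : ℕ) + 1) := by
  constructor
  · rw [Rprod_eq_prod_ofFn, PiGA_eq_sum_nthAbove, mul_prod_ofFn_one_sub_smul]
    · intro i _ h
      apply two_mul_u_ne_natCast (2 * k + i)
      push_cast
      linear_combination h
    · intro i j hij
      rw [Fin.lt_def] at hij
      exact Aprime_mul_T_mul_T (Fin.ne_of_val_ne (by simp only [val_nthAbove]; omega))
        (Fin.ne_of_val_ne (by simp only [val_nthAbove]; omega)) (by simp) (by simp)
  · rw [PiGA, mul_sub, sub_mul, mul_one, one_mul, mul_smul_comm, smul_mul_assoc,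
      Aprime_mul_sum_T_comm]

theorem aprime_Rprod_eq_aprime_Pi (k : Fin n) (hk : (k : ℕ) + 1 ≤ n - 1) :
    Aprime ((k : ℕ) + 1) * Rprod k = Aprime ((k : ℕ) + 1) * PiGA k ∧
    Aprime ((k : ℕ) + 1) * PiGA k = PiGA k * Aprime ((k : ℕ) + 1) :=
  aprime_Rprod_eq_aprime_Pi_general k

end
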